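/- Let F and G be free groups, let x ∈ F be a primitive element (i.e. x belongs to some free basis of F), and let y ∈ G be an element of infinite order. Then the free product of F and G amalgamated over an infinite cyclic group identifying x with y — that is, the pushout of the two group homomorphisms ℤ → F sending 1 to x and ℤ → G sending 1 to y — is a free group. (This is the group-theoretic assertion, used in the proof of Theorem 4.4 via the Loop Theorem, that gluing a handlebody to another handlebody along a single primitive annulus yields a fundamental group π₁(H₁) ∗_ℤ π₁(H₂) that is free.) -/
import Mathlib


universe u

/-- An element `x` of a group `F` is *primitive* if it belongs to some free basis of `F`. -/
def IsPrimitiveElement {F : Type*} [Group F] (x : F) : Prop :=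
  ∃ (ι : Type) (b : FreeGroupBasis ι F) (i : ι), b i = x

/-- The family over `Bool` with value `F` at `false` and `G` at `true`. -/
def BoolFam (F G : Type u) : Bool → Type u := fun i => Bool.rec F G i

instance BoolFam.instGroup {F G : Type u} [Group F] [Group G] :
    ∀ i, Group (BoolFam F G i) := fun i =>
  Bool.rec (inferInstanceAs (Group F)) (inferInstanceAs (Group G)) i

/-- The pair of homomorphisms `φ₁ : ℤ → F`, `φ₂ : ℤ → G` viewed as a family of homomorphisms
out of the base group `Multiplicative ℤ`, indexed by `Bool`. -/
def boolFamHom {F G : Type u} [Group F] [Group G]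
    (φ₁ : Multiplicative ℤ →* F) (φ₂ : Multiplicative ℤ →* G) :
    ∀ i, Multiplicative ℤ →* BoolFam F G i := fun i =>
  Bool.rec (motive := fun i => Multiplicative ℤ →* BoolFam F G i) φ₁ φ₂ i

/-- The free product of two free groups `F` and `G` amalgamated over an infinite cyclic group,
identifying a primitive element `x ∈ F` with an infinite-order element `y ∈ G`, is free. -/
theorem isFreeGroup_pushout_of_primitive {F G : Type u} [Group F] [Group G]
    [IsFreeGroup F] [IsFreeGroup G]
    (x : F) (hx : IsPrimitiveElement x)
    (y : G) (hy : ¬ IsOfFinOrder y)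
    (φ₁ : Multiplicative ℤ →* F) (hφ₁ : φ₁ (Multiplicative.ofAdd 1) = x)
    (φ₂ : Multiplicative ℤ →* G) (hφ₂ : φ₂ (Multiplicative.ofAdd 1) = y) :
    IsFreeGroup (Monoid.PushoutI (boolFamHom φ₁ φ₂)) := by
  classical
  obtain ⟨ι, b, i₀, hb⟩ := hx
  set κ := IsFreeGroup.Generators G with hκ
  set c : FreeGroupBasis κ G := IsFreeGroup.basis G with hc
  set S := ({j : ι // j ≠ i₀} ⊕ κ) with hS
  set g : G →* FreeGroup S := c.lift (fun k => FreeGroup.of (Sum.inr k)) with hg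
  set f : F →* FreeGroup S :=
    b.lift (fun j => if h : j = i₀ then g y else FreeGroup.of (Sum.inl ⟨j, h⟩)) with hf
  have hgc : ∀ k : κ, g (c k) = FreeGroup.of (Sum.inr k) := by
    intro k; rw [hg]; simp [FreeGroupBasis.lift]
  have hfb : ∀ j : ι, f (b j) =
      if h : j = i₀ then g y else FreeGroup.of (Sum.inl ⟨j, h⟩) := by
    intro j; rw [hf]; simp [FreeGroupBasis.lift]
  have hfx : f x = g y := by rw [← hb, hfb]; simp
  have hcomp : ∀ i : Bool,
      (Bool.rec (motive := fun i => BoolFam F G i →* FreeGroup S) f g i).comp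
        (boolFamHom φ₁ φ₂ i) = g.comp φ₂ := by
    intro i
    cases i with
    | false =>
        refine MonoidHom.ext_mint ?_
        show f (φ₁ (Multiplicative.ofAdd 1)) = g (φ₂ (Multiplicative.ofAdd 1))
        rw [hφ₁, hφ₂, hfx]
    | true => rfl
  set Φ : Monoid.PushoutI (boolFamHom φ₁ φ₂) →* FreeGroup S :=
    Monoid.PushoutI.lift _ (g.comp φ₂) hcomp with hΦ
  set Ψ : FreeGroup S →* Monoid.PushoutI (boolFamHom φ₁ φ₂) :=
    FreeGroup.lift (Sum.elim
      (fun j => Monoid.PushoutI.of (φ := boolFamHom φ₁ φ₂) false (show F from b j.1))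
      (fun k => Monoid.PushoutI.of (φ := boolFamHom φ₁ φ₂) true (show G from c k))) with hΨ
  have hΦf : ∀ a : F, Φ (Monoid.PushoutI.of (φ := boolFamHom φ₁ φ₂) false a) = f a :=
    fun a => Monoid.PushoutI.lift_of _ _ _ _
  have hΦg : ∀ a : G, Φ (Monoid.PushoutI.of (φ := boolFamHom φ₁ φ₂) true a) = g a :=
    fun a => Monoid.PushoutI.lift_of _ _ _ _
  have hΨinl : ∀ j : {j : ι // j ≠ i₀}, Ψ (FreeGroup.of (Sum.inl j)) =
      Monoid.PushoutI.of (φ := boolFamHom φ₁ φ₂) false (b j.1) := by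
    intro j; rw [hΨ]; simp
  have hΨinr : ∀ k : κ, Ψ (FreeGroup.of (Sum.inr k)) =
      Monoid.PushoutI.of (φ := boolFamHom φ₁ φ₂) true (c k) := by
    intro k; rw [hΨ]; simp
  have key : Monoid.PushoutI.of (φ := boolFamHom φ₁ φ₂) false x
      = Monoid.PushoutI.of (φ := boolFamHom φ₁ φ₂) true y := by
    rw [← hφ₁, ← hφ₂]
    exact (Monoid.PushoutI.of_apply_eq_base (boolFamHom φ₁ φ₂) false
        (Multiplicative.ofAdd 1)).trans
      (Monoid.PushoutI.of_apply_eq_base (boolFamHom φ₁ φ₂) true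
        (Multiplicative.ofAdd 1)).symm
  have hΨg : Ψ.comp g = Monoid.PushoutI.of (φ := boolFamHom φ₁ φ₂) true := by
    refine c.ext_hom _ _ (fun k => ?_)
    show Ψ (g (c k)) = _
    rw [hgc, hΨinr]
    rfl
  have hΦΨ : Φ.comp Ψ = MonoidHom.id _ := by
    refine FreeGroup.ext_hom _ _ (fun s => ?_)
    cases s with
    | inl j =>
        show Φ (Ψ (FreeGroup.of (Sum.inl j))) = FreeGroup.of (Sum.inl j)
        rw [hΨinl, hΦf, hfb]
        simp [j.2]
    | inr k =>
        show Φ (Ψ (FreeGroup.of (Sum.inr k))) = FreeGroup.of (Sum.inr k)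
        rw [hΨinr, hΦg, hgc]
  have hΨΦ : Ψ.comp Φ = MonoidHom.id _ := by
    refine Monoid.PushoutI.hom_ext_nonempty (fun i => ?_)
    cases i with
    | false =>
        refine b.ext_hom _ _ (fun j => ?_)
        show Ψ (Φ (Monoid.PushoutI.of (φ := boolFamHom φ₁ φ₂) false (b j)))
          = Monoid.PushoutI.of (φ := boolFamHom φ₁ φ₂) false (b j)
        rw [hΦf, hfb]
        by_cases h : j = i₀
        · subst h
          rw [dif_pos rfl, ← MonoidHom.comp_apply, hΨg, hb]
          exact key.symm
        · rw [dif_neg h, hΨinl]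
    | true =>
        refine c.ext_hom _ _ (fun k => ?_)
        show Ψ (Φ (Monoid.PushoutI.of (φ := boolFamHom φ₁ φ₂) true (c k)))
          = Monoid.PushoutI.of (φ := boolFamHom φ₁ φ₂) true (c k)
        rw [hΦg, hgc, hΨinr]
  let e : Monoid.PushoutI (boolFamHom φ₁ φ₂) ≃* FreeGroup S :=
    { toFun := Φ, invFun := Ψ,
      left_inv := fun a => DFunLike.congr_fun hΨΦ a,
      right_inv := fun a => DFunLike.congr_fun hΦΨ a,
      map_mul' := Φ.map_mul }
  exact ((FreeGroupBasis.ofFreeGroup S).map e.symm).isFreeGroup
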